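/- arXiv:0710.2088 — 4 statements merged into one kernel-verified Lean document; each statement's English description precedes it below -/
import Mathlib

section
/- Let q be a prime power, n ≥ 1, x : ZMod n → F_q, and let X = circulant(x) be the circulant matrix with first column x. Then x is a most complicated point for every translation-invariant linear operator A on F_q^n if and only if X is invertible over F_q. -/
open Function Polynomial Finset

/-- The preperiod of the orbit of `x` under `T`: the least `s ≥ 0` such that
`T^[s+t] x = T^[s] x` for some `t ≥ 1`. -/
noncomputable def orbitPreperiod {S : Type*} (T : S → S) (x : S) : ℕ :=
  sInf {s | ∃ t, 1 ≤ t ∧ T^[s + t] x = T^[s] x}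

/-- The (eventual) period of the orbit of `x` under `T`: the least `t ≥ 1` such that
`T^[s+t] x = T^[s] x` for some `s ≥ 0`. -/
noncomputable def orbitPeriod {S : Type*} (T : S → S) (x : S) : ℕ :=
  sInf {t | 1 ≤ t ∧ ∃ s, T^[s + t] x = T^[s] x}

/-- `x` is most complicated for `T` if both its period and its preperiod are maximal. -/
def MostComplicated {S : Type*} [Fintype S] (T : S → S) (x : S) : Prop :=
  orbitPeriod T x = Finset.univ.sup (fun y => orbitPeriod T y) ∧
  orbitPreperiod T x = Finset.univ.sup (fun y => orbitPreperiod T y)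

/-- `x` is almost most complicated for `T` if its period is maximal and its preperiod
equals the maximal preperiod minus one. -/
def AlmostMostComplicated {S : Type*} [Fintype S] (T : S → S) (x : S) : Prop :=
  orbitPeriod T x = Finset.univ.sup (fun y => orbitPeriod T y) ∧
  orbitPreperiod T x = Finset.univ.sup (fun y => orbitPreperiod T y) - 1

/-- The cyclic shift operator `δ` on `F^n`: `(δ x) i = x (i+1)`. -/
def shiftOp (F : Type*) [Field F] (n : ℕ) : (ZMod n → F) →ₗ[F] (ZMod n → F) where
  toFun x := fun i => x (i + 1)
  map_add' _ _ := rfl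
  map_smul' _ _ := rfl

open Matrix

/-!
Translation-invariant operators on `F^(ZMod n)` are combinations of translations, so they
commute with every circulant matrix `C(w)`; moreover `C(w) e₀ = w` and `C(w) v = C(v) w`.

If `X = C(x)` is invertible, every `y` equals `C(w) x` for some `w`, and `C(w)` commutes with
every such `A`; hence any relation `A^(s+t) x = A^s x` transports to `y`, and the orbit of `x`
has the largest period and preperiod.

Conversely take `A = X`. Since `x = X e₀`, the orbit of `x` is that of `e₀` without its first
point, so its preperiod is maximal only if `e₀` is periodic, `X^t e₀ = e₀`. Then
`X^t y = X^t C(y) e₀ = C(y) X^t e₀ = y` for all `y`, so `X` is invertible.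
-/

section Orbits

variable {S : Type*}

theorem exists_iterate_add_eq [Finite S] (T : S → S) (x : S) :
    ∃ s t, 1 ≤ t ∧ T^[s + t] x = T^[s] x := by
  obtain ⟨a, b, hab, h⟩ := Finite.exists_ne_map_eq_of_infinite (fun k : ℕ => T^[k] x)
  rcases lt_or_gt_of_ne hab with hlt | hlt
  · exact ⟨a, b - a, by omega, by rw [Nat.add_sub_cancel' hlt.le]; exact h.symm⟩
  · exact ⟨b, a - b, by omega, by rw [Nat.add_sub_cancel' hlt.le]; exact h⟩

theorem exists_iterate_orbitPreperiod_add_eq [Finite S] (T : S → S) (x : S) :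
    ∃ t, 1 ≤ t ∧ T^[orbitPreperiod T x + t] x = T^[orbitPreperiod T x] x := by
  obtain ⟨s, t, ht, hst⟩ := exists_iterate_add_eq T x
  exact Nat.sInf_mem (s := {s | ∃ t, 1 ≤ t ∧ T^[s + t] x = T^[s] x}) ⟨s, t, ht, hst⟩

theorem exists_iterate_add_orbitPeriod_eq [Finite S] (T : S → S) (x : S) :
    1 ≤ orbitPeriod T x ∧ ∃ s, T^[s + orbitPeriod T x] x = T^[s] x := by
  obtain ⟨s, t, ht, hst⟩ := exists_iterate_add_eq T x
  exact Nat.sInf_mem (s := {t | 1 ≤ t ∧ ∃ s, T^[s + t] x = T^[s] x}) ⟨t, ht, s, hst⟩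

theorem mostComplicated_of_forall_iterate_eq [Fintype S] {T : S → S} {x : S}
    (h : ∀ s t, T^[s + t] x = T^[s] x → ∀ y, T^[s + t] y = T^[s] y) :
    MostComplicated T x := by
  constructor
  · refine le_antisymm (Finset.le_sup (Finset.mem_univ x)) (Finset.sup_le fun y _ => ?_)
    obtain ⟨ht, s, hs⟩ := exists_iterate_add_orbitPeriod_eq T x
    exact Nat.sInf_le ⟨ht, s, h s _ hs y⟩
  · refine le_antisymm (Finset.le_sup (Finset.mem_univ x)) (Finset.sup_le fun y _ => ?_)
    obtain ⟨t, ht, hs⟩ := exists_iterate_orbitPreperiod_add_eq T x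
    exact Nat.sInf_le ⟨t, ht, h _ t hs y⟩

/-- The orbit of `T y` is that of `y` minus its first point, so its preperiod is one less. -/
theorem exists_iterate_eq_self_of_mostComplicated_apply [Fintype S] {T : S → S} {y : S}
    (h : MostComplicated T (T y)) : ∃ t, 1 ≤ t ∧ T^[t] y = y := by
  obtain ⟨t, ht, hs⟩ := exists_iterate_orbitPreperiod_add_eq T y
  by_cases hzero : orbitPreperiod T y = 0
  · exact ⟨t, ht, by simpa [hzero] using hs⟩
  have hle : orbitPreperiod T (T y) ≤ orbitPreperiod T y - 1 := by
    refine Nat.sInf_le ⟨t, ht, ?_⟩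
    simp only [← iterate_succ_apply]
    rwa [show (orbitPreperiod T y - 1 + t).succ = orbitPreperiod T y + t by omega,
      show (orbitPreperiod T y - 1).succ = orbitPreperiod T y by omega]
  have hmax := h.2 ▸ Finset.le_sup (f := orbitPreperiod T) (Finset.mem_univ y)
  omega

end Orbits

section Circulant

variable {ι R : Type*} [Fintype ι] [AddCommGroup ι] [CommRing R]

theorem circulant_mulVec_comm (v w : ι → R) : circulant v *ᵥ w = circulant w *ᵥ v := by
  ext i
  simp only [mulVec, dotProduct, circulant_apply]
  exact Fintype.sum_equiv (Equiv.subLeft i) _ _ fun j => by simp [mul_comm]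

theorem circulant_mulVec_single_zero [DecidableEq ι] (v : ι → R) :
    circulant v *ᵥ Pi.single 0 1 = v := by
  ext i
  simp [mulVec_single, circulant_apply]

theorem circulant_mulVec_eq_sum (v w : ι → R) :
    circulant v *ᵥ w = ∑ j, v j • fun i => w (i - j) := by
  rw [circulant_mulVec_comm]
  ext i
  simp [mulVec, dotProduct, circulant_apply, mul_comm]

end Circulant

section ShiftInvariant

variable {F : Type*} [Field F] {n : ℕ}

theorem shiftOp_pow_apply (k : ℕ) (y : ZMod n → F) :
    (shiftOp F n ^ k) y = fun i => y (i + k) := by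
  induction k with
  | zero => simp
  | succ k ih =>
    rw [pow_succ', Module.End.mul_apply, ih]
    ext i
    simp only [shiftOp, LinearMap.coe_mk, AddHom.coe_mk, Nat.cast_succ]
    ring_nf

variable {A : Module.End F (ZMod n → F)}

theorem map_translate_of_commute_shiftOp [NeZero n] (hA : Commute A (shiftOp F n)) (c : ZMod n)
    (y : ZMod n → F) : A (fun i => y (i + c)) = fun i => A y (i + c) := by
  have hc := shiftOp_pow_apply (F := F) (n := n) c.val
  rw [ZMod.natCast_zmod_val] at hc
  rw [← hc, ← hc, ← Module.End.mul_apply, (hA.pow_right c.val).eq, Module.End.mul_apply]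

theorem map_circulant_mulVec_of_commute_shiftOp [NeZero n] (hA : Commute A (shiftOp F n))
    (v w : ZMod n → F) : A (circulant v *ᵥ w) = circulant v *ᵥ A w := by
  simp only [circulant_mulVec_eq_sum, map_sum, map_smul, sub_eq_add_neg,
    map_translate_of_commute_shiftOp hA]

theorem iterate_circulant_mulVec_of_commute_shiftOp [NeZero n] (hA : Commute A (shiftOp F n))
    (k : ℕ) (v w : ZMod n → F) : A^[k] (circulant v *ᵥ w) = circulant v *ᵥ A^[k] w :=
  (Function.Commute.iterate_left
    (fun w => map_circulant_mulVec_of_commute_shiftOp hA v w) k) w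

theorem commute_mulVecLin_circulant_shiftOp [NeZero n] (v : ZMod n → F) :
    Commute (circulant v).mulVecLin (shiftOp F n) := by
  refine LinearMap.ext fun y => ?_
  simp only [Module.End.mul_apply, mulVecLin_apply, circulant_mulVec_eq_sum]
  ext i
  simp [shiftOp, Finset.sum_apply, sub_add_eq_add_sub]

end ShiftInvariant

theorem stmt1_general (n : ℕ) [NeZero n]
    (F : Type) [Field F] [Fintype F]
    (x : ZMod n → F) :
    (∀ A : (ZMod n → F) →ₗ[F] (ZMod n → F),
        A ∘ₗ shiftOp F n = shiftOp F n ∘ₗ A →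
        MostComplicated (fun y : ZMod n → F => A y) x)
      ↔ IsUnit (Matrix.circulant x) := by
  constructor
  · intro h
    have hX := commute_mulVecLin_circulant_shiftOp x
    have hmc : MostComplicated (circulant x).mulVecLin
        ((circulant x).mulVecLin (Pi.single 0 1)) := by
      rw [mulVecLin_apply, circulant_mulVec_single_zero]
      exact h _ hX
    obtain ⟨t, ht, hper⟩ := exists_iterate_eq_self_of_mostComplicated_apply hmc
    have hid : ∀ y, ((circulant x).mulVecLin)^[t] y = y := fun y => by
      rw [← circulant_mulVec_single_zero y, iterate_circulant_mulVec_of_commute_shiftOp hX, hper]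
    rw [← mulVec_injective_iff_isUnit]
    refine Function.LeftInverse.injective (g := ((circulant x).mulVecLin)^[t - 1]) fun y => ?_
    have hy := hid y
    rwa [← Nat.sub_add_cancel ht, iterate_succ_apply] at hy
  · intro hX A hA
    refine mostComplicated_of_forall_iterate_eq fun s t hst y => ?_
    obtain ⟨w, rfl⟩ := mulVec_surjective_iff_isUnit.mpr hX y
    rw [← circulant_mulVec_comm, iterate_circulant_mulVec_of_commute_shiftOp hA,
      iterate_circulant_mulVec_of_commute_shiftOp hA, hst]

/-- Lemma 1: `x` is a most complicated point for every translation-invariant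
linear operator on `F_q^n` iff the circulant matrix with first column `x` is invertible. -/
theorem stmt1 (q n : ℕ) (hq : IsPrimePow q) [NeZero n]
    (F : Type) [Field F] [Fintype F] (hF : Fintype.card F = q)
    (x : ZMod n → F) :
    (∀ A : (ZMod n → F) →ₗ[F] (ZMod n → F),
        A ∘ₗ shiftOp F n = shiftOp F n ∘ₗ A →
        MostComplicated (fun y : ZMod n → F => A y) x)
      ↔ IsUnit (Matrix.circulant x) :=
  stmt1_general n F x
end

section
/- Let n be an odd prime and let c : ZMod n → ℤ be defined by c(a) = 1 if a is a quadratic nonresidue mod n (i.e., a ≠ 0 and a is not a square in ZMod n) and c(a) = 0 otherwise. Let X be the integer circulant matrix with entries X(i,j) = c(i − j). Then: if n = 4k+1 for some natural number k, then det X = 2k · k^{(n−1)/2}; and if n = 4k+3 for some natural number k, then det X = (2k+1) · (k+1)^{(n−1)/2}. -/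
/-!
The circulant matrix of `c` is diagonalised by a primitive additive character `ψ`, with
eigenvalues `λ t = ∑ a, c a * ψ (a * t)`. Writing `2 c = 1 - χ - δ₀` with `χ` the quadratic
character, one gets `λ 0 = (n - 1) / 2` and `λ t = -(1 + χ t * g) / 2` for `t ≠ 0`, where `g` is
the quadratic Gauss sum. Half of the nonzero `t` are residues, so the product of the remaining
eigenvalues is `((1 - g ^ 2) / 4) ^ ((n - 1) / 2)`, and `g ^ 2 = χ (-1) * n`.
-/

open Matrix Finset

section Circulant

variable {R K : Type*} [CommRing R] [Fintype R] [DecidableEq R] [Field K]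

theorem circulant_mul_of_addChar (ψ : AddChar R K) (v : R → K) :
    circulant v * of (fun i t ↦ ψ (-(i * t))) =
      of (fun i t ↦ ψ (-(i * t))) * diagonal (fun t ↦ ∑ a, v a * ψ (a * t)) := by
  ext i t
  rw [mul_apply, mul_diagonal, of_apply, Finset.mul_sum]
  refine Fintype.sum_equiv (Equiv.subLeft i) _ _ fun j ↦ ?_
  simp only [circulant_apply, of_apply, Equiv.subLeft_apply]
  rw [mul_left_comm, ← AddChar.map_add_eq_mul]
  ring_nf

theorem of_addChar_mul_of_addChar {ψ : AddChar R K} (hψ : ψ.IsPrimitive) :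
    of (fun i t ↦ ψ (-(i * t))) * of (fun t j ↦ ψ (t * j)) = (Fintype.card R : K) • 1 := by
  ext i j
  have hsum : ∑ t, ψ (-(i * t)) * ψ (t * j) = ∑ t, ψ (t * (j - i)) :=
    Fintype.sum_congr _ _ fun t ↦ by rw [← AddChar.map_add_eq_mul]; ring_nf
  rw [mul_apply]
  simp only [of_apply]
  rw [hsum, AddChar.sum_mulShift _ hψ, Matrix.smul_apply, one_apply]
  by_cases hij : i = j <;> simp [hij, sub_eq_zero, Ne.symm]

theorem det_circulant_eq_prod {ψ : AddChar R K} (hψ : ψ.IsPrimitive)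
    (hR : (Fintype.card R : K) ≠ 0) (v : R → K) :
    (circulant v).det = ∏ t, ∑ a, v a * ψ (a * t) := by
  set W : Matrix R R K := of fun i t ↦ ψ (-(i * t))
  have hW : W.det ≠ 0 := by
    refine left_ne_zero_of_mul (b := (of fun t j ↦ ψ (t * j)).det) ?_
    rw [← det_mul, of_addChar_mul_of_addChar hψ, det_smul, det_one, mul_one]
    exact pow_ne_zero _ hR
  have h := congrArg det (circulant_mul_of_addChar ψ v)
  rw [det_mul, det_mul, mul_comm, det_diagonal] at h
  exact mul_left_cancel₀ hW h

end Circulant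

theorem Finset.prod_comp_eq_pow_of_sum_eq_zero {ι M : Type*} [CommMonoid M] {s : Finset ι}
    {ε : ι → ℤ} (hε : ∀ i ∈ s, ε i = 1 ∨ ε i = -1) (hsum : ∑ i ∈ s, ε i = 0) (f : ℤ → M) :
    ∏ i ∈ s, f (ε i) = (f 1 * f (-1)) ^ (#s / 2) := by
  classical
  have hneg : ∀ i ∈ s.filter (¬ε · = 1), ε i = -1 := fun i hi ↦
    (hε i (mem_filter.1 hi).1).resolve_left (mem_filter.1 hi).2
  have hcard : #(s.filter (ε · = 1)) = #(s.filter (¬ε · = 1)) := by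
    rw [← sum_filter_add_sum_filter_not s (ε · = 1), sum_congr rfl fun i hi ↦ (mem_filter.1 hi).2,
      sum_congr rfl hneg] at hsum
    simp only [sum_const, nsmul_eq_mul, mul_one, mul_neg] at hsum
    omega
  have hs : #s = 2 * #(s.filter (ε · = 1)) := by
    rw [← card_filter_add_card_filter_not (ε · = 1), ← hcard, two_mul]
  rw [← prod_filter_mul_prod_filter_not s (ε · = 1),
    prod_congr rfl fun i hi ↦ congrArg f (mem_filter.1 hi).2,
    prod_congr rfl fun i hi ↦ congrArg f (hneg i hi), prod_const, prod_const,
    ← hcard, hs, Nat.mul_div_cancel_left _ two_pos, mul_pow]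

theorem gaussSum_mulShift_of_isQuadratic {F R : Type*} [Field F] [Fintype F] [CommRing R]
    [IsDomain R] {χ : MulChar F R} (hχ : χ ≠ 1) (hχq : χ.IsQuadratic) (ψ : AddChar F R) (t : F) :
    gaussSum χ (ψ.mulShift t) = χ t * gaussSum χ ψ := by
  rcases eq_or_ne t 0 with rfl | ht
  · simp [gaussSum, MulChar.sum_eq_zero_of_ne_one hχ, MulChar.map_zero]
  · simpa [hχq.inv] using gaussSum_mulShift_eq χ ψ (Units.mk0 t ht)

section Quadratic

variable {F K : Type*} [Field F] [Fintype F] [DecidableEq F]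

variable (F) in
def quadraticNonresidueIndicator (a : F) : ℤ := if a ≠ 0 ∧ ¬IsSquare a then 1 else 0

theorem two_mul_quadraticNonresidueIndicator (a : F) :
    2 * quadraticNonresidueIndicator F a = 1 - quadraticChar F a - if a = 0 then 1 else 0 := by
  simp only [quadraticNonresidueIndicator, quadraticChar_apply, quadraticCharFun]
  split_ifs <;> simp_all

variable [Field K] [CharZero K]

theorem two_mul_sum_quadraticNonresidueIndicator_mul (hF : ringChar F ≠ 2)
    {ψ : AddChar F K} (hψ : ψ.IsPrimitive) (t : F) :
    2 * ∑ a, (quadraticNonresidueIndicator F a : K) * ψ (a * t) =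
      (if t = 0 then (Fintype.card F : K) else 0) -
        (quadraticChar F).ringHomComp (Int.castRingHom K) t *
          gaussSum ((quadraticChar F).ringHomComp (Int.castRingHom K)) ψ - 1 := by
  set χ := (quadraticChar F).ringHomComp (Int.castRingHom K)
  have hχ : χ ≠ 1 :=
    (MulChar.ringHomComp_ne_one_iff Int.cast_injective).2 (quadraticChar_ne_one hF)
  have hpoint (a : F) : 2 * (quadraticNonresidueIndicator F a : K) * ψ (a * t) =
      ψ (a * t) - χ a * ψ (a * t) - if a = 0 then 1 else 0 := by
    have := congrArg (Int.cast : ℤ → K) (two_mul_quadraticNonresidueIndicator a)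
    push_cast at this
    rw [this]
    rcases eq_or_ne a 0 with rfl | ha <;> simp [*, χ, sub_mul]
  have hgauss : ∑ a, χ a * ψ (a * t) = χ t * gaussSum χ ψ := by
    rw [← gaussSum_mulShift_of_isQuadratic hχ ((quadraticChar_isQuadratic F).comp _)]
    simp only [gaussSum, AddChar.mulShift_apply, mul_comm t]
  rw [mul_sum]
  simp only [← mul_assoc, hpoint, sum_sub_distrib, AddChar.sum_mulShift t hψ, hgauss, sum_ite_eq',
    mem_univ, if_true]
  split_ifs <;> simp

theorem det_circulant_quadraticNonresidueIndicator (hF : ringChar F ≠ 2)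
    {ψ : AddChar F K} (hψ : ψ.IsPrimitive) :
    ((circulant (quadraticNonresidueIndicator F)).det : K) =
      ((Fintype.card F : K) - 1) / 2 *
        ((1 - quadraticChar F (-1) * Fintype.card F) / 4) ^ ((Fintype.card F - 1) / 2) := by
  set χ := (quadraticChar F).ringHomComp (Int.castRingHom K)
  set g := gaussSum χ ψ
  have hχ : χ ≠ 1 :=
    (MulChar.ringHomComp_ne_one_iff Int.cast_injective).2 (quadraticChar_ne_one hF)
  have hg : g ^ 2 = quadraticChar F (-1) * Fintype.card F :=
    gaussSum_sq hχ ((quadraticChar_isQuadratic F).comp _) hψ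
  have heigen (t : F) : ∑ a, (quadraticNonresidueIndicator F a : K) * ψ (a * t) =
      ((if t = 0 then (Fintype.card F : K) else 0) - quadraticChar F t * g - 1) / 2 := by
    rw [eq_div_iff two_ne_zero, mul_comm]
    exact two_mul_sum_quadraticNonresidueIndicator_mul hF hψ t
  have hcast : ((circulant (quadraticNonresidueIndicator F)).det : K) =
      (circulant fun a ↦ (quadraticNonresidueIndicator F a : K)).det := by
    simpa [map_circulant] using (Int.castRingHom K).map_det (circulant _)
  have hsum : ∑ t ∈ univ.erase 0, quadraticChar F t = 0 := by
    rw [sum_erase _ (MulChar.map_zero _), quadraticChar_sum_zero hF]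
  rw [hcast, det_circulant_eq_prod hψ (Nat.cast_ne_zero.2 Fintype.card_ne_zero),
    ← mul_prod_erase univ _ (mem_univ 0), heigen,
    prod_congr rfl fun t ht ↦ by rw [heigen, if_neg (ne_of_mem_erase ht), zero_sub],
    prod_comp_eq_pow_of_sum_eq_zero (fun t ht ↦ quadraticChar_dichotomy (ne_of_mem_erase ht)) hsum
      fun x ↦ (-((x : K) * g) - 1) / 2,
    card_erase_of_mem (mem_univ 0), card_univ, ← hg]
  simp only [if_true, quadraticChar_zero, Int.cast_zero, zero_mul]
  push_cast
  ring

end Quadratic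

/-- the determinant of the integer circulant matrix of the indicator of
quadratic nonresidues modulo an odd prime `n`. -/
theorem stmt2 (n : ℕ) [Fact n.Prime] (hodd : Odd n)
    (c : ZMod n → ℤ)
    (hc : ∀ a : ZMod n, c a = if a ≠ 0 ∧ ¬ ∃ b : ZMod n, b ^ 2 = a then 1 else 0) :
    (∀ k : ℕ, n = 4 * k + 1 →
        (Matrix.circulant c).det = 2 * (k : ℤ) * (k : ℤ) ^ ((n - 1) / 2)) ∧
    (∀ k : ℕ, n = 4 * k + 3 →
        (Matrix.circulant c).det = (2 * (k : ℤ) + 1) * ((k : ℤ) + 1) ^ ((n - 1) / 2)) := by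
  have hF : ringChar (ZMod n) ≠ 2 := by
    rw [ZMod.ringChar_zmod_n]
    rintro rfl
    exact Nat.not_odd_iff_even.2 even_two hodd
  have hc' : c = quadraticNonresidueIndicator (ZMod n) := by
    funext a
    simp [hc, quadraticNonresidueIndicator, isSquare_iff_exists_sq, eq_comm]
  have hdet :=
    det_circulant_quadraticNonresidueIndicator (K := ℂ) hF (ZMod.isPrimitive_stdAddChar n)
  rw [← hc', quadraticChar_neg_one hF, ZMod.card] at hdet
  refine ⟨fun k hk ↦ ?_, fun k hk ↦ ?_⟩
  · rw [ZMod.χ₄_nat_one_mod_four (n := n) (by omega)] at hdet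
    rw [show (n - 1) / 2 = 2 * k by omega] at hdet ⊢
    subst hk
    apply Int.cast_injective (α := ℂ)
    rw [hdet]
    push_cast
    rw [show (1 - 1 * (4 * k + 1)) / 4 = -(k : ℂ) by ring, (even_two_mul k).neg_pow]
    ring
  · rw [ZMod.χ₄_nat_three_mod_four (n := n) (by omega)] at hdet
    rw [show (n - 1) / 2 = 2 * k + 1 by omega] at hdet ⊢
    subst hk
    apply Int.cast_injective (α := ℂ)
    rw [hdet]
    push_cast
    ring
end

section
/- Let q be a prime power, n ≥ 1 with gcd(n, q) = 1, let B be a circulant n×n matrix over F_q, and set A = B·Δ, where Δ = δ − I and δ is the cyclic shift. Let A(y) ∈ F_q[y] be the polynomial associated with the circulant matrix A. Let x : ZMod n → F_q and F(y) = ∑_{i ∈ ZMod n} x(i) y^{val(i)}, and suppose gcd(F(y), ∑_{i=0}^{n−1} y^i) = 1 in F_q[y]. Then for all integers m, l ≥ 1: A^m x = A^l x if and only if A(y)^m ≡ A(y)^l (mod ∑_{i=0}^{n−1} y^i) in F_q[y]. -/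
/-!
Identify a vector `v : ZMod n → F_q` with the polynomial `∑ v i X^i` modulo `X^n - 1`. This turns
multiplication by a circulant matrix into multiplication of polynomials, and the identification is
injective, so `A^m x = A^l x` iff `X^n - 1 ∣ (A(X)^m - A(X)^l) F(X)`. As `n ≠ 0` in `F_q`, `X^n - 1`
is the product of the coprime factors `X - 1` and `1 + X + ⋯ + X^{n-1}`. The first always divides
`A(X)^m - A(X)^l`, since the first column of `A = BΔ` sums to zero; the second is coprime to `F(X)`.
-/

open Polynomial Finset Matrix

noncomputable def cyclicPoly {R : Type*} [CommRing R] {n : ℕ} [NeZero n] (v : ZMod n → R) : R[X] :=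
  ∑ i : ZMod n, C (v i) * X ^ i.val

section CyclicPoly

variable {R : Type*} [CommRing R] {n : ℕ}

local notation "π" => AdjoinRoot.mk ((X : R[X]) ^ n - 1)

lemma mk_X_pow_mod (s : ℕ) : π (X ^ (s % n)) = π (X ^ s) := by
  have hroot : AdjoinRoot.root ((X : R[X]) ^ n - 1) ^ n = 1 := by
    rw [← AdjoinRoot.mk_X, ← map_pow, ← sub_eq_zero, ← map_one π, ← map_sub, AdjoinRoot.mk_self]
  rw [map_pow, map_pow, AdjoinRoot.mk_X, ← Nat.div_add_mod s n, pow_add, pow_mul, hroot, one_pow,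
    one_mul, Nat.div_add_mod]

variable [NeZero n]

lemma cyclicPoly_sub (u v : ZMod n → R) : cyclicPoly (u - v) = cyclicPoly u - cyclicPoly v := by
  simp only [cyclicPoly, Pi.sub_apply, C_sub, sub_mul, sum_sub_distrib]

lemma coeff_cyclicPoly_val (v : ZMod n → R) (i : ZMod n) : (cyclicPoly v).coeff i.val = v i := by
  rw [cyclicPoly, finsetSum_coeff, sum_eq_single i (fun j _ hji => ?_) (by simp)]
  · simp
  · rw [coeff_C_mul_X_pow, if_neg (fun h => hji (ZMod.val_injective n h.symm))]

lemma eval_one_cyclicPoly (v : ZMod n → R) : (cyclicPoly v).eval 1 = ∑ i, v i := by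
  simp [cyclicPoly, eval_finsetSum]

lemma degree_cyclicPoly_lt (v : ZMod n → R) : (cyclicPoly v).degree < n := by
  refine (degree_sum_le _ _).trans_lt ((Finset.sup_lt_iff (WithBot.bot_lt_coe n)).2 fun i _ => ?_)
  exact (degree_C_mul_X_pow_le _ _).trans_lt (WithBot.coe_lt_coe.2 i.val_lt)

lemma mk_cyclicPoly_circulant_mulVec (c y : ZMod n → R) :
    π (cyclicPoly (circulant c *ᵥ y)) = π (cyclicPoly c) * π (cyclicPoly y) := by
  have hconv : cyclicPoly (circulant c *ᵥ y)
      = ∑ j : ZMod n, ∑ i : ZMod n, C (c i * y j) * X ^ (i + j).val := by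
    simp only [cyclicPoly, mulVec, circulant_apply, dotProduct, map_sum, sum_mul]
    rw [sum_comm]
    refine sum_congr rfl fun j _ => Fintype.sum_equiv (Equiv.subRight j) _ _ fun i => ?_
    rw [Equiv.subRight_apply, sub_add_cancel]
  have hprod : cyclicPoly c * cyclicPoly y
      = ∑ j : ZMod n, ∑ i : ZMod n, C (c i * y j) * X ^ (i.val + j.val) := by
    rw [cyclicPoly, cyclicPoly, sum_mul_sum, sum_comm]
    refine sum_congr rfl fun j _ => sum_congr rfl fun i _ => ?_
    rw [C_mul, pow_add]
    ring
  rw [← map_mul, hconv, hprod, map_sum, map_sum]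
  refine sum_congr rfl fun j _ => ?_
  rw [map_sum, map_sum]
  refine sum_congr rfl fun i _ => ?_
  rw [map_mul, map_mul π _ (X ^ (_ + _)), ZMod.val_add, mk_X_pow_mod]

lemma mk_cyclicPoly_circulant_pow_mulVec (c y : ZMod n → R) (k : ℕ) :
    π (cyclicPoly (circulant c ^ k *ᵥ y)) = π (cyclicPoly c) ^ k * π (cyclicPoly y) := by
  induction k with
  | zero => simp
  | succ k ih => rw [pow_succ', ← mulVec_mulVec, mk_cyclicPoly_circulant_mulVec, ih]; ring

lemma mk_cyclicPoly_inj [Nontrivial R] {u v : ZMod n → R} :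
    π (cyclicPoly u) = π (cyclicPoly v) ↔ u = v := by
  refine ⟨fun h => ?_, fun h => h ▸ rfl⟩
  rw [AdjoinRoot.mk_eq_mk, ← cyclicPoly_sub] at h
  have hzero : cyclicPoly (u - v) = 0 := by
    by_contra hne
    refine (monic_X_pow_sub_C (1 : R) (NeZero.ne n)).not_dvd_of_degree_lt hne ?_ (by simpa using h)
    rw [degree_X_pow_sub_C (NeZero.pos n)]
    exact degree_cyclicPoly_lt _
  funext i
  have hcoeff := coeff_cyclicPoly_val (u - v) i
  rwa [hzero, coeff_zero, Pi.sub_apply, eq_comm, sub_eq_zero] at hcoeff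

theorem circulant_pow_mulVec_eq_iff [Nontrivial R] (c y : ZMod n → R) (m l : ℕ) :
    circulant c ^ m *ᵥ y = circulant c ^ l *ᵥ y ↔
      (X : R[X]) ^ n - 1 ∣ (cyclicPoly c ^ m - cyclicPoly c ^ l) * cyclicPoly y := by
  rw [← mk_cyclicPoly_inj, mk_cyclicPoly_circulant_pow_mulVec, mk_cyclicPoly_circulant_pow_mulVec,
    ← map_pow, ← map_pow, ← map_mul, ← map_mul, AdjoinRoot.mk_eq_mk, sub_mul]

end CyclicPoly

lemma sum_circulant_mulVec {R ι : Type*} [Semiring R] [Fintype ι] [AddGroup ι] (c y : ι → R) :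
    ∑ i, (circulant c *ᵥ y) i = (∑ i, c i) * ∑ j, y j := by
  simp only [mulVec, dotProduct, circulant_apply]
  rw [sum_comm, mul_sum]
  refine sum_congr rfl fun j _ => ?_
  rw [← sum_mul]
  exact congrArg (· * y j) (Fintype.sum_equiv (Equiv.subRight j) (fun i => c (i - j)) c fun _ => rfl)

lemma natCast_ne_zero_of_coprime_card {F : Type*} [Field F] [Fintype F] {n : ℕ}
    (h : n.Coprime (Fintype.card F)) : (n : F) ≠ 0 := fun hn =>
  CharP.ringChar_ne_one <| Nat.Coprime.eq_one_of_dvd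
    (Nat.Coprime.coprime_dvd_left (ringChar.dvd hn) h) (ringChar.dvd (FiniteField.cast_card_eq_zero F))

lemma isCoprime_X_sub_one_geom_sum {F : Type*} [Field F] {n : ℕ} (hn : (n : F) ≠ 0) :
    IsCoprime (X - 1 : F[X]) (∑ i ∈ range n, X ^ i) := by
  rw [← C_1, (irreducible_X_sub_C 1).coprime_iff_not_dvd, dvd_iff_isRoot, IsRoot, eval_geom_sum]
  simpa using hn

lemma X_pow_sub_one_dvd_mul_iff {F : Type*} [Field F] {n : ℕ} (hn : (n : F) ≠ 0) {D f : F[X]}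
    (hD : X - 1 ∣ D) (hf : IsCoprime f (∑ i ∈ range n, X ^ i)) :
    X ^ n - 1 ∣ D * f ↔ ∑ i ∈ range n, X ^ i ∣ D := by
  rw [← geom_sum_mul]
  refine ⟨fun h => hf.symm.dvd_of_dvd_mul_right (dvd_of_mul_right_dvd h), fun h => ?_⟩
  exact ((isCoprime_X_sub_one_geom_sum hn).symm.mul_dvd h hD).mul_right f

theorem stmt6_general (q n : ℕ) [NeZero n] (hnq : Nat.gcd n q = 1)
    (F : Type) [Field F] [Fintype F] (hF : Fintype.card F = q)
    (b : ZMod n → F)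
    (A : Matrix (ZMod n) (ZMod n) F)
    (hA : A = Matrix.circulant b *
        (Matrix.circulant (fun i : ZMod n => if i = -1 then (1 : F) else 0) - 1))
    (x : ZMod n → F)
    (hx : IsCoprime (∑ i : ZMod n, C (x i) * X ^ i.val)
        (∑ i ∈ Finset.range n, (X : Polynomial F) ^ i)) :
    ∀ m l : ℕ, 1 ≤ m → 1 ≤ l →
      ((A ^ m).mulVec x = (A ^ l).mulVec x ↔
        (∑ i ∈ Finset.range n, (X : Polynomial F) ^ i) ∣
          ((∑ i : ZMod n, C (A i 0) * X ^ i.val) ^ m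
            - (∑ i : ZMod n, C (A i 0) * X ^ i.val) ^ l)) := by
  intro m l hm hl
  set u : ZMod n → F := (fun i => if i = -1 then 1 else 0) - Pi.single 0 1
  set a := circulant b *ᵥ u
  have hAa : A = circulant a := by
    rw [hA, ← circulant_single_one F (ZMod n), ← circulant_sub, circulant_mul]
  have hApoly : ∑ i : ZMod n, C (A i 0) * X ^ i.val = cyclicPoly a := by
    simp only [hAa, circulant_apply, sub_zero, cyclicPoly]
  have hu : ∑ i, u i = 0 := by simp [u, sum_sub_distrib]
  have ha : X - 1 ∣ cyclicPoly a := by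
    rw [← C_1, dvd_iff_isRoot, IsRoot, eval_one_cyclicPoly, sum_circulant_mulVec, hu, mul_zero]
  change IsCoprime (cyclicPoly x) _ at hx
  have hn : (n : F) ≠ 0 := natCast_ne_zero_of_coprime_card (hF ▸ hnq)
  rw [hApoly, hAa, circulant_pow_mulVec_eq_iff,
    X_pow_sub_one_dvd_mul_iff hn (dvd_sub (ha.trans (dvd_pow_self _ (by omega)))
      (ha.trans (dvd_pow_self _ (by omega)))) hx]

/-- for `A = B·Δ` with `B` circulant and `gcd(F(y), 1+y+⋯+y^{n-1}) = 1`,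
the equality `A^m x = A^l x` (for `m, l ≥ 1`) holds iff
`A(y)^m ≡ A(y)^l (mod 1+y+⋯+y^{n-1})`. -/
theorem stmt6 (q n : ℕ) (hq : IsPrimePow q) [NeZero n] (hnq : Nat.gcd n q = 1)
    (F : Type) [Field F] [Fintype F] (hF : Fintype.card F = q)
    (b : ZMod n → F)
    (A : Matrix (ZMod n) (ZMod n) F)
    (hA : A = Matrix.circulant b *
        (Matrix.circulant (fun i : ZMod n => if i = -1 then (1 : F) else 0) - 1))
    (x : ZMod n → F)
    (hx : IsCoprime (∑ i : ZMod n, C (x i) * X ^ i.val)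
        (∑ i ∈ Finset.range n, (X : Polynomial F) ^ i)) :
    ∀ m l : ℕ, 1 ≤ m → 1 ≤ l →
      ((A ^ m).mulVec x = (A ^ l).mulVec x ↔
        (∑ i ∈ Finset.range n, (X : Polynomial F) ^ i) ∣
          ((∑ i : ZMod n, C (A i 0) * X ^ i.val) ^ m
            - (∑ i : ZMod n, C (A i 0) * X ^ i.val) ^ l)) :=
  stmt6_general q n hnq F hF b A hA x hx
end

section
/- Let q = p^d be a prime power, let n be an odd prime with n ≠ p, and let f : ZMod n → F_q be a nontrivial multiplicative function. Then in F_q[y], gcd( ∑_{a ∈ ZMod n} f(a) y^{val(a)} , ∑_{i=0}^{n−1} y^i ) = 1; equivalently, the polynomial ∑_{i=1}^{n−1} f(i) y^i is invertible in F_q[y] modulo 1 + y + ⋯ + y^{n−1}. -/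
/-!
A common root `x` of the two polynomials, taken in an algebraic closure, is a primitive `n`-th
root of unity, and evaluating the first polynomial at `x` gives the Gauss sum of the
multiplicative character `f` against the additive character `a ↦ x ^ val a`. Since `f` is
nontrivial, this Gauss sum times that of `f⁻¹` is `n`, which is nonzero because `n ≠ char F`.
-/

open Polynomial Finset

def IsMultFun {n : ℕ} {F : Type*} [Field F] (f : ZMod n → F) : Prop :=
  f 0 = 0 ∧ (∃ a : ZMod n, a ≠ 0 ∧ f a ≠ 0) ∧
    ∀ a b : ZMod n, a ≠ 0 → b ≠ 0 → f (a * b) = f a * f b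

theorem Polynomial.isCoprime_sum_mulChar_X_pow_cyclotomic {n : ℕ} [Fact n.Prime] {F : Type*}
    [Field F] [NeZero (n : F)] {χ : MulChar (ZMod n) F} (hχ : χ ≠ 1) :
    IsCoprime (∑ a : ZMod n, C (χ a) * X ^ a.val) (cyclotomic n F) := by
  let K := AlgebraicClosure F
  have : NeZero (n : K) := NeZero.nat_of_injective (algebraMap F K).injective
  rw [isCoprime_iff_aeval_ne_zero_of_isAlgClosed F K]
  refine fun x ↦ or_iff_not_imp_right.mpr fun hx ↦ ?_
  have hprim : IsPrimitiveRoot x n := by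
    rw [← isRoot_cyclotomic_iff, ← map_cyclotomic n (algebraMap F K), IsRoot, eval_map_algebraMap]
    exact not_not.mp hx
  have hgauss : aeval x (∑ a : ZMod n, C (χ a) * X ^ a.val) =
      gaussSum (χ.ringHomComp (algebraMap F K)) (AddChar.zmodChar n hprim.pow_eq_one) := by
    simp [gaussSum, AddChar.zmodChar_apply, aeval_def]
  rw [hgauss]
  exact gaussSum_ne_zero_of_nontrivial (by simpa using NeZero.ne (n : K))
    ((MulChar.ringHomComp_ne_one_iff (algebraMap F K).injective).mpr hχ)
    (AddChar.zmodChar_primitive_of_primitive_root n hprim)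

namespace IsMultFun

variable {n : ℕ} [Fact n.Prime] {F : Type*} [Field F] {f : ZMod n → F}

theorem apply_ne_zero (hf : IsMultFun f) {a : ZMod n} (ha : a ≠ 0) : f a ≠ 0 := by
  obtain ⟨-, ⟨b, hb, hfb⟩, hmul⟩ := hf
  intro hfa
  refine hfb ?_
  rw [← mul_div_cancel₀ b ha, hmul a _ ha (div_ne_zero hb ha), hfa, zero_mul]

theorem apply_one (hf : IsMultFun f) : f 1 = 1 := by
  have h := hf.2.2 1 1 one_ne_zero one_ne_zero
  rw [mul_one] at h
  exact (mul_eq_left₀ (hf.apply_ne_zero one_ne_zero)).mp h.symm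

theorem map_mul (hf : IsMultFun f) (a b : ZMod n) : f (a * b) = f a * f b := by
  rcases eq_or_ne a 0 with rfl | ha
  · rw [zero_mul, hf.1, zero_mul]
  rcases eq_or_ne b 0 with rfl | hb
  · rw [mul_zero, hf.1, mul_zero]
  exact hf.2.2 a b ha hb

def toMulChar (hf : IsMultFun f) : MulChar (ZMod n) F where
  toFun := f
  map_one' := hf.apply_one
  map_mul' := hf.map_mul
  map_nonunit' a ha := by rw [isUnit_iff_ne_zero, not_not] at ha; rw [ha, hf.1]

theorem toMulChar_apply (hf : IsMultFun f) (a : ZMod n) : hf.toMulChar a = f a := rfl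

theorem toMulChar_ne_one (hf : IsMultFun f) (hnt : ∃ a : ZMod n, a ≠ 0 ∧ f a ≠ 1) :
    hf.toMulChar ≠ 1 := by
  obtain ⟨a, ha, hfa⟩ := hnt
  intro h
  exact hfa (by rw [← hf.toMulChar_apply, h, MulChar.one_apply (isUnit_iff_ne_zero.mpr ha)])

end IsMultFun

theorem stmt9_general (p n : ℕ)
    [Fact n.Prime] (hnp : n ≠ p)
    (F : Type) [Field F] [CharP F p]
    (f : ZMod n → F) (hf : IsMultFun f)
    (hnt : ∃ a : ZMod n, a ≠ 0 ∧ f a ≠ 1) :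
    IsCoprime (∑ a : ZMod n, C (f a) * X ^ a.val)
      (∑ i ∈ Finset.range n, (X : Polynomial F) ^ i) := by
  have : NeZero (n : F) := ⟨CharP.cast_ne_zero_of_ne_of_prime F Fact.out hnp.symm⟩
  rw [← cyclotomic_prime]
  simpa only [IsMultFun.toMulChar_apply] using
    isCoprime_sum_mulChar_X_pow_cyclotomic (hf.toMulChar_ne_one hnt)

/-- key step of Theorem 2: for a nontrivial multiplicative function `f`
on `ZMod n` (`n` an odd prime, `n ≠ p = char F_q`), the polynomial `∑ f(a) y^{val a}`
is coprime to `1 + y + ⋯ + y^{n-1}` in `F_q[y]`. -/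
theorem stmt9 (p d q n : ℕ) (hp : p.Prime) (hq : q = p ^ d)
    [Fact n.Prime] (hodd : Odd n) (hnp : n ≠ p)
    (F : Type) [Field F] [Fintype F] [CharP F p] (hF : Fintype.card F = q)
    (f : ZMod n → F) (hf : IsMultFun f)
    (hnt : ∃ a : ZMod n, a ≠ 0 ∧ f a ≠ 1) :
    IsCoprime (∑ a : ZMod n, C (f a) * X ^ a.val)
      (∑ i ∈ Finset.range n, (X : Polynomial F) ^ i) :=
  stmt9_general p n hnp F f hf hnt
end
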